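/- Let f : ℝᵈ → ℝ be continuously differentiable and let (x, m, v) : (0,∞) → ℝᵈ × ℝᵈ × ℝᵈ be a differentiable solution of the Adam ODE system such that every entry of v(t) is strictly positive for all t > 0. Define the Lyapunov function E(t) = f(x(t)) + (η/(2(1−α))) ⟨m(t), g_t(m(t), v(t))⟩. Then E is differentiable on (0,∞) and E'(t) ≤ −η ψ(t) ⟨m(t), g_t(m(t), v(t))⟩ for every t > 0, where ψ(t) = 1 − (1−β)/(4(1−α)) + (1/2) · 1/(e^{(1−α)t} − 1) − ((1−β)/(4(1−α))) · 1/(e^{(1−β)t} − 1). (Lyapunov descent inequality of Theorem 1 in the Dirac-measure case, where the AdamFlow solution is δ_{(x(t),m(t),v(t))} by Proposition 1.) -/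

import Mathlib

open MeasureTheory Filter
open scoped RealInnerProductSpace

/-- The Adam update direction `g_t(m, v)`, defined coordinatewise by
`g_t(m,v)_i = (m_i/(1−e^{−(1−α)t})) / (√(v_i/(1−e^{−(1−β)t})) + ε)`. -/
noncomputable def adamG (α β ε : ℝ) (d : ℕ) (t : ℝ) (m v : EuclideanSpace ℝ (Fin d)) :
    EuclideanSpace ℝ (Fin d) :=
  WithLp.toLp 2 fun i => (m i / (1 - Real.exp (-(1 - α) * t))) /
    (Real.sqrt (v i / (1 - Real.exp (-(1 - β) * t))) + ε)

/-- Coordinatewise square of a vector. -/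
noncomputable def vsq (d : ℕ) (w : EuclideanSpace ℝ (Fin d)) : EuclideanSpace ℝ (Fin d) :=
  WithLp.toLp 2 fun i => (w i) ^ 2

/-! The Lyapunov function splits over coordinates, so it suffices to treat one coordinate. Write
`A = 1 - e^{-(1-α)t}`, `B = 1 - e^{-(1-β)t}` and `φ = m · g` for the coordinate
`g = (m/A)/(√(v/B) + ε)`.
The bias-corrected moments `m/A` and `v/B` again solve relaxation equations, now with rates
`(1-α)/A` and `(1-β)/B`. Differentiating `f(x) + η/(2(1-α)) φ`, the terms linear in `∇f` cancel,
leaving `-(η/2)(1 + 1/A) φ` plus a term coming from `d/dt √(v/B)`; that term is at most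
`η(1-β)/(4(1-α)B) φ`, by dropping the nonnegative `(∇f)²` and using `√(v/B) ≤ √(v/B) + ε`.
Finally `1/A = 1 + 1/(e^{(1-α)t} - 1)` and likewise for `B` turn the bound into `-η ψ φ`. -/

open Real

theorem one_div_one_sub_exp_neg {x : ℝ} (hx : x ≠ 0) :
    1 / (1 - exp (-x)) = 1 + 1 / (exp x - 1) := by
  have h1 : exp x - 1 ≠ 0 := by simpa [sub_eq_zero] using hx
  have h2 : 1 - exp (-x) ≠ 0 := by simpa [sub_eq_zero, eq_comm (a := (1:ℝ))] using hx
  rw [exp_neg] at h2 ⊢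
  field_simp
  ring

theorem one_sub_exp_neg_mul_pos {a t : ℝ} (ha : 0 < a) (ht : 0 < t) : 0 < 1 - exp (-a * t) := by
  have : -a * t < 0 := by nlinarith
  linarith [exp_lt_one_iff.2 this]

theorem HasDerivAt.div_one_sub_exp_neg {u : ℝ → ℝ} {c w t : ℝ}
    (hu : HasDerivAt u (c * (w - u t)) t) (h : 1 - Real.exp (-c * t) ≠ 0) :
    HasDerivAt (fun s => u s / (1 - Real.exp (-c * s)))
      (c / (1 - Real.exp (-c * t)) * (w - u t / (1 - Real.exp (-c * t)))) t := by
  have hdenom : HasDerivAt (fun s => 1 - Real.exp (-c * s)) (c * Real.exp (-c * t)) t := by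
    simpa [mul_comm] using ((hasDerivAt_id t).const_mul (-c)).exp.const_sub 1
  refine (hu.div hdenom h).congr_deriv ?_
  generalize hA : 1 - Real.exp (-c * t) = A at h ⊢
  rw [show Real.exp (-c * t) = 1 - A by linarith]
  field_simp
  ring

theorem HasDerivAt.euclideanSpace_apply {ι : Type*} [Fintype ι] {u : ℝ → EuclideanSpace ℝ ι}
    {u' : EuclideanSpace ℝ ι} {t : ℝ} (h : HasDerivAt u u' t) (i : ι) :
    HasDerivAt (fun s => u s i) (u' i) t :=
  (EuclideanSpace.proj (𝕜 := ℝ) i).hasFDerivAt.comp_hasDerivAt t h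

noncomputable def adamCoord (a b ε t μ ν : ℝ) : ℝ :=
  (μ / (1 - exp (-a * t))) / (√(ν / (1 - exp (-b * t))) + ε)

/-- The rate `ψ(t)` of the descent inequality, with `a = 1 - α` and `b = 1 - β`. -/
noncomputable def lyapunovRate (a b t : ℝ) : ℝ :=
  1 - b / (4 * a) + (1 / 2) * (1 / (exp (a * t) - 1)) - (b / (4 * a)) * (1 / (exp (b * t) - 1))

theorem lyapunovRate_eq {a b t : ℝ} (ha : a ≠ 0) (hb : b ≠ 0) (ht : t ≠ 0) :
    lyapunovRate a b t =
      (1 + 1 / (1 - exp (-a * t))) / 2 - b / (4 * a) * (1 / (1 - exp (-b * t))) := by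
  rw [lyapunovRate, neg_mul, neg_mul, one_div_one_sub_exp_neg (mul_ne_zero ha ht),
    one_div_one_sub_exp_neg (mul_ne_zero hb ht)]
  ring

theorem adamCoord_lyapunov_descent {a b ε η t G : ℝ} {m v : ℝ → ℝ} (ha : 0 < a) (hb : 0 < b)
    (hε : 0 ≤ ε) (hη : 0 ≤ η) (ht : 0 < t) (hv0 : 0 < v t)
    (hm : HasDerivAt m (a * (G - m t)) t) (hv : HasDerivAt v (b * (G ^ 2 - v t)) t) :
    ∃ D, HasDerivAt (fun s => m s * adamCoord a b ε s (m s) (v s)) D t ∧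
      G * (-η * adamCoord a b ε t (m t) (v t)) + η / (2 * a) * D ≤
        -η * lyapunovRate a b t * (m t * adamCoord a b ε t (m t) (v t)) := by
  have hA := one_sub_exp_neg_mul_pos ha ht
  have hB := one_sub_exp_neg_mul_pos hb ht
  have hmHat := hm.div_one_sub_exp_neg hA.ne'
  have hvHat := hv.div_one_sub_exp_neg hB.ne'
  rw [lyapunovRate_eq ha.ne' hb.ne' ht.ne']
  unfold adamCoord
  set A := 1 - exp (-a * t)
  set B := 1 - exp (-b * t)
  have hVpos : 0 < v t / B := by positivity
  set S := √(v t / B)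
  have hSpos : 0 < S := Real.sqrt_pos.2 hVpos
  have hSsq : S ^ 2 = v t / B := Real.sq_sqrt hVpos.le
  set S' := b / B * (G ^ 2 - S ^ 2) / (2 * S)
  have hsqrt : HasDerivAt (fun s => √(v s / (1 - exp (-b * s)))) S' t := by
    simpa only [S', hSsq] using hvHat.sqrt hVpos.ne'
  set g := m t / A / (S + ε)
  set g' := (a / A * (G - m t / A) * (S + ε) - m t / A * S') / (S + ε) ^ 2
  have hg : HasDerivAt (fun s => m s / (1 - exp (-a * s)) / (√(v s / (1 - exp (-b * s))) + ε))
      g' t :=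
    hmHat.div (hsqrt.add_const ε) (by positivity)
  refine ⟨a * (G - m t) * g + m t * g', hm.mul hg, ?_⟩
  have hφ : 0 ≤ m t * g := by
    simp only [g, ← mul_div_assoc, ← sq]
    positivity
  have hS' : -S' / (S + ε) ≤ b / (2 * B) := by
    have : -S' ≤ b / (2 * B) * S := by
      calc -S' = b / (2 * B) * ((S ^ 2 - G ^ 2) / S) := by simp only [S']; field_simp; ring
        _ ≤ b / (2 * B) * (S ^ 2 / S) := by gcongr; exact sub_le_self _ (sq_nonneg G)
        _ = b / (2 * B) * S := by field_simp
    calc -S' / (S + ε) ≤ b / (2 * B) * (S / (S + ε)) := by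
          rw [← mul_div_assoc]; gcongr
      _ ≤ b / (2 * B) :=
          mul_le_of_le_one_right (by positivity) ((div_le_one (by positivity)).2 (by linarith))
  calc _ = -(η / 2) * (1 + 1 / A) * (m t * g) + η / (2 * a) * (m t * g) * (-S' / (S + ε)) := by
        simp only [g, g']
        field_simp
        ring
    _ ≤ -(η / 2) * (1 + 1 / A) * (m t * g) + η / (2 * a) * (m t * g) * (b / (2 * B)) := by
        gcongr
    _ = -η * ((1 + 1 / A) / 2 - b / (4 * a) * (1 / B)) * (m t * g) := by
        clear_value g A B
        ring

theorem adamG_apply (α β ε : ℝ) (d : ℕ) (t : ℝ) (m v : EuclideanSpace ℝ (Fin d)) (i : Fin d) :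
    adamG α β ε d t m v i = adamCoord (1 - α) (1 - β) ε t (m i) (v i) := rfl

theorem inner_adamG (α β ε : ℝ) (d : ℕ) (t : ℝ) (w m v : EuclideanSpace ℝ (Fin d)) :
    ⟪w, adamG α β ε d t m v⟫ = ∑ i, w i * adamCoord (1 - α) (1 - β) ε t (m i) (v i) := by
  simp [PiLp.inner_apply, adamG_apply, mul_comm]

/-- **Lyapunov descent inequality of Theorem 1 in the Dirac-measure case.** Along a
differentiable solution `(x, m, v)` of the Adam ODE with `v(t)` entrywise strictly positive,
the Lyapunov function `E(t) = f(x(t)) + (η/(2(1−α)))⟨m(t), g_t(m(t), v(t))⟩` is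
differentiable on `(0,∞)` with
`E'(t) ≤ −η ψ(t)⟨m(t), g_t(m(t), v(t))⟩`, where
`ψ(t) = 1 − (1−β)/(4(1−α)) + (1/2)·1/(e^{(1−α)t} − 1) − ((1−β)/(4(1−α)))·1/(e^{(1−β)t} − 1)`. -/
theorem lyapunov_descent_dirac
    (d : ℕ) (α β ε η : ℝ)
    (hα : α ∈ Set.Ico (0 : ℝ) 1) (hβ : β ∈ Set.Ico (0 : ℝ) 1) (hε : 0 < ε) (hη : 0 < η)
    (f : EuclideanSpace ℝ (Fin d) → ℝ) (hf : ContDiff ℝ 1 f)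
    (x m v : ℝ → EuclideanSpace ℝ (Fin d))
    (hvpos : ∀ t > (0 : ℝ), ∀ i, 0 < v t i)
    (hm : ∀ t > (0 : ℝ), HasDerivAt m ((1 - α) • (gradient f (x t) - m t)) t)
    (hv : ∀ t > (0 : ℝ), HasDerivAt v ((1 - β) • (vsq d (gradient f (x t)) - v t)) t)
    (hx : ∀ t > (0 : ℝ), HasDerivAt x ((-η) • adamG α β ε d t (m t) (v t)) t) :
    ∀ t > (0 : ℝ), ∃ D : ℝ,
      HasDerivAt (fun s => f (x s) + (η / (2 * (1 - α))) * ⟪m s, adamG α β ε d s (m s) (v s)⟫)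
        D t ∧
      D ≤ -η * (1 - (1 - β) / (4 * (1 - α))
            + (1 / 2) * (1 / (Real.exp ((1 - α) * t) - 1))
            - ((1 - β) / (4 * (1 - α))) * (1 / (Real.exp ((1 - β) * t) - 1)))
          * ⟪m t, adamG α β ε d t (m t) (v t)⟫ := by
  intro t ht
  set G := gradient f (x t)
  have hfx : HasDerivAt (fun s => f (x s))
      (∑ i, G i * (-η * adamCoord (1 - α) (1 - β) ε t (m t i) (v t i))) t := by
    have h : HasDerivAt (fun s => f (x s)) ⟪G, (-η) • adamG α β ε d t (m t) (v t)⟫ t :=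
      ((hf.differentiable one_ne_zero) (x t)).hasGradientAt.hasFDerivAt.comp_hasDerivAt t (hx t ht)
    simpa only [inner_smul_right, inner_adamG, Finset.mul_sum, mul_left_comm] using h
  choose D hD hDle using fun i => adamCoord_lyapunov_descent (sub_pos.2 hα.2) (sub_pos.2 hβ.2)
    hε.le hη.le ht (hvpos t ht i) (by simpa using (hm t ht).euclideanSpace_apply i)
    (by simpa [vsq] using (hv t ht).euclideanSpace_apply i)
  have hE := hfx.add
    ((HasDerivAt.fun_sum (u := Finset.univ) fun i _ => hD i).const_mul (η / (2 * (1 - α))))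
  simp only [← inner_adamG] at hE
  refine ⟨_, hE, ?_⟩
  rw [inner_adamG, Finset.mul_sum, Finset.mul_sum, ← Finset.sum_add_distrib]
  exact Finset.sum_le_sum fun i _ => hDle i
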